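/- For the 8×8 matrix M_P, the left eigenvector (1,1,1,1,1,1,1,1) with eigenvalue 16 is unique up to scaling among nonnegative left eigenvectors, and the right eigenvector (1,1,1,1,1,1,1,1)ᵗ with eigenvalue 16 is unique up to scaling among nonnegative right eigenvectors (Perron–Frobenius uniqueness for the primitive matrix M_P). -/

import Mathlib

/-!
If a matrix with constant row sums `r` has a power `A ^ k` with positive entries, every eigenvector
of `A` for `r` is an eigenvector of `A ^ k` for `r ^ k`, the row sums of `A ^ k`; at a maximal
coordinate of the eigenvector the eigen-equation for `A ^ k` is a weighted average with positive
weights, so all coordinates agree. For `M_P` both the row and the column sums are `16` and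
`M_P ^ 2` is positive, which settles right eigenvectors and, through the transpose, left ones.
-/

def MPR : Matrix (Fin 8) (Fin 8) ℝ :=
  !![1,1,1,1,3,3,3,3;
     9,5,2,0,0,0,0,0;
     0,4,6,6,0,0,0,0;
     0,0,1,3,3,3,3,3;
     3,3,3,3,1,1,1,1;
     0,0,0,0,9,5,2,0;
     0,0,0,0,0,4,6,6;
     3,3,3,3,0,0,1,3]

open Matrix

namespace Matrix

variable {n R : Type*} [Fintype n]

theorem pow_mulVec_eq_smul [DecidableEq n] [CommSemiring R] {A : Matrix n n R} {r : R}
    {v : n → R} (hv : A *ᵥ v = r • v) (k : ℕ) : A ^ k *ᵥ v = r ^ k • v := by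
  induction k with
  | zero => simp
  | succ k ih => rw [pow_succ', ← mulVec_mulVec, ih, mulVec_smul, hv, smul_smul, pow_succ]

variable [Field R] [LinearOrder R] [IsStrictOrderedRing R]

theorem eq_of_mulVec_eq_smul_of_pos {B : Matrix n n R} {μ : R} (hB : ∀ i j, 0 < B i j)
    (hrow : B *ᵥ 1 = μ • 1) {v : n → R} (hv : B *ᵥ v = μ • v) (i j : n) : v i = v j := by
  have : Nonempty n := ⟨i⟩
  obtain ⟨m, hm⟩ := Finite.exists_max v
  have hsum : ∑ k, B m k * (v m - v k) = 0 := by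
    have hrow_m := congrFun hrow m
    have hv_m := congrFun hv m
    simp only [mulVec, dotProduct, Pi.one_apply, mul_one, Pi.smul_apply, smul_eq_mul]
      at hrow_m hv_m
    simp only [mul_sub, Finset.sum_sub_distrib, ← Finset.sum_mul, hrow_m, hv_m, sub_self]
  have hconst : ∀ k, v k = v m := fun k => by
    have hk := (Finset.sum_eq_zero_iff_of_nonneg fun k _ =>
      mul_nonneg (hB m k).le (sub_nonneg.2 (hm k))).1 hsum k (Finset.mem_univ k)
    linarith [(mul_eq_zero.1 hk).resolve_left (hB m k).ne']
  rw [hconst i, hconst j]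

theorem eq_of_mulVec_eq_smul_of_pow_pos [DecidableEq n] {A : Matrix n n R} {k : ℕ} {r : R}
    (hA : ∀ i j, 0 < (A ^ k) i j) (hrow : A *ᵥ 1 = r • 1) {v : n → R} (hv : A *ᵥ v = r • v)
    (i j : n) : v i = v j :=
  eq_of_mulVec_eq_smul_of_pos hA (pow_mulVec_eq_smul hrow k) (pow_mulVec_eq_smul hv k) i j

theorem eq_of_vecMul_eq_smul_of_pow_pos [DecidableEq n] {A : Matrix n n R} {k : ℕ} {r : R}
    (hA : ∀ i j, 0 < (A ^ k) i j) (hcol : 1 ᵥ* A = r • 1) {v : n → R} (hv : v ᵥ* A = r • v)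
    (i j : n) : v i = v j := by
  rw [← mulVec_transpose] at hcol hv
  exact eq_of_mulVec_eq_smul_of_pow_pos (fun i j => by rw [← transpose_pow]; exact hA j i)
    hcol hv i j

end Matrix

theorem Pi.exists_pos_smul_one_of_nonneg_of_forall_eq {n R : Type*} [Field R] [LinearOrder R]
    [IsStrictOrderedRing R] {v : n → R} (hv₀ : ∀ i, 0 ≤ v i) (hv : v ≠ 0)
    (hconst : ∀ i j, v i = v j) : ∃ c : R, 0 < c ∧ v = c • 1 := by
  obtain ⟨i, hi⟩ := Function.ne_iff.1 hv
  exact ⟨v i, (hv₀ i).lt_of_ne' hi, funext fun j => by simp [hconst j i]⟩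

theorem MPR_mulVec_one : MPR *ᵥ 1 = (16 : ℝ) • 1 := by
  ext i; fin_cases i <;> norm_num [MPR, mulVec, dotProduct, Fin.sum_univ_succ]

theorem one_vecMul_MPR : 1 ᵥ* MPR = (16 : ℝ) • 1 := by
  ext i; fin_cases i <;> norm_num [MPR, vecMul, dotProduct, Fin.sum_univ_succ]

theorem MPR_sq_pos (i j : Fin 8) : 0 < (MPR ^ 2) i j := by
  fin_cases i <;> fin_cases j <;> norm_num [MPR, sq, mul_apply, Fin.sum_univ_succ]

/-- Perron–Frobenius uniqueness for the primitive matrix `M_P`: the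
all-ones vector is a left and right eigenvector for the eigenvalue 16, and
every nonnegative nonzero left (resp. right) eigenvector for the
eigenvalue 16 is a positive scalar multiple of it. -/
theorem MP_PF_uniqueness :
    Matrix.vecMul (fun _ => (1:ℝ)) MPR = (16 : ℝ) • (fun _ => (1:ℝ)) ∧
    MPR.mulVec (fun _ => (1:ℝ)) = (16 : ℝ) • (fun _ => (1:ℝ)) ∧
    (∀ v : Fin 8 → ℝ, (∀ i, 0 ≤ v i) → v ≠ 0 →
      Matrix.vecMul v MPR = (16 : ℝ) • v → ∃ c : ℝ, 0 < c ∧ v = c • (fun _ => (1:ℝ))) ∧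
    (∀ v : Fin 8 → ℝ, (∀ i, 0 ≤ v i) → v ≠ 0 →
      MPR.mulVec v = (16 : ℝ) • v → ∃ c : ℝ, 0 < c ∧ v = c • (fun _ => (1:ℝ))) :=
  ⟨one_vecMul_MPR, MPR_mulVec_one,
    fun _ hv₀ hv h => Pi.exists_pos_smul_one_of_nonneg_of_forall_eq hv₀ hv
      (eq_of_vecMul_eq_smul_of_pow_pos MPR_sq_pos one_vecMul_MPR h),
    fun _ hv₀ hv h => Pi.exists_pos_smul_one_of_nonneg_of_forall_eq hv₀ hv
      (eq_of_mulVec_eq_smul_of_pow_pos MPR_sq_pos MPR_mulVec_one h)⟩
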